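/- arXiv:2202.01484 — 9 statements merged into one kernel-verified Lean document; each statement's English description precedes it below -/
import Mathlib

section
/- (Theorem 3.1) Let α : ℝ → ℝ³ be a unit-speed timelike Frenet curve with frame (T, N, B) and curvatures κ, τ, let θ be an antiderivative of τ, and define β(s) = α(s) + sin(θ(s))·N(s) + cos(θ(s))·B(s). Assume 1 + κ(s)·sin(θ(s)) > 0 for all s. Then β is a timelike curve (η(β′(s), β′(s)) < 0 for all s), and there exists a fixed nonzero vector d ∈ ℝ³ such that s ↦ η(β′(s)/‖β′(s)‖, d) is constant if and only if there exists a fixed nonzero vector d ∈ ℝ³ such that s ↦ η(T(s), d) is constant; that is, β is a timelike general helix if and only if α is a timelike general helix. -/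
noncomputable section

/-- Lorentzian inner product on Minkowski 3-space. -/
def eta (u v : Fin 3 → ℝ) : ℝ := -(u 0 * v 0) + u 1 * v 1 + u 2 * v 2

/-- Lorentzian norm. -/
def lnorm (u : Fin 3 → ℝ) : ℝ := Real.sqrt |eta u u|

theorem stmt2
    (α T N B : ℝ → Fin 3 → ℝ) (κ τ : ℝ → ℝ)
    (hαC : ContDiff ℝ (⊤ : ℕ∞) α) (hTC : ContDiff ℝ (⊤ : ℕ∞) T) (hNC : ContDiff ℝ (⊤ : ℕ∞) N)
    (hBC : ContDiff ℝ (⊤ : ℕ∞) B) (hκC : ContDiff ℝ (⊤ : ℕ∞) κ) (hτC : ContDiff ℝ (⊤ : ℕ∞) τ)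
    (hT : ∀ s, deriv α s = T s)
    (hTT : ∀ s, eta (T s) (T s) = -1)
    (hNN : ∀ s, eta (N s) (N s) = 1)
    (hBB : ∀ s, eta (B s) (B s) = 1)
    (hTN : ∀ s, eta (T s) (N s) = 0)
    (hTB : ∀ s, eta (T s) (B s) = 0)
    (hNB : ∀ s, eta (N s) (B s) = 0)
    (hκ : ∀ s, 0 < κ s)
    (hFr1 : ∀ s, deriv T s = κ s • N s)
    (hFr2 : ∀ s, deriv N s = κ s • T s + τ s • B s)
    (hFr3 : ∀ s, deriv B s = (-τ s) • N s)
    (θ : ℝ → ℝ) (hθ : ∀ s, HasDerivAt θ (τ s) s)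
    (β : ℝ → Fin 3 → ℝ)
    (hβ : ∀ s, β s = α s + Real.sin (θ s) • N s + Real.cos (θ s) • B s)
    (hpos : ∀ s, 0 < 1 + κ s * Real.sin (θ s)) :
    (∀ s, eta (deriv β s) (deriv β s) < 0) ∧
    ((∃ d : Fin 3 → ℝ, d ≠ 0 ∧ ∃ c : ℝ, ∀ s, eta ((lnorm (deriv β s))⁻¹ • deriv β s) d = c) ↔ (∃ d : Fin 3 → ℝ, d ≠ 0 ∧ ∃ c : ℝ, ∀ s, eta (T s) d = c)) := by
  have hβ' : ∀ s, HasDerivAt β ((1 + κ s * Real.sin (θ s)) • T s) s := by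
    intro s
    have hα' : HasDerivAt α (T s) s := by
      have := (hαC.differentiable (by simp) s).hasDerivAt
      rwa [hT s] at this
    have hN' : HasDerivAt N (κ s • T s + τ s • B s) s := by
      have := (hNC.differentiable (by simp) s).hasDerivAt
      rwa [hFr2 s] at this
    have hB' : HasDerivAt B ((-τ s) • N s) s := by
      have := (hBC.differentiable (by simp) s).hasDerivAt
      rwa [hFr3 s] at this
    have hs : HasDerivAt (fun u => Real.sin (θ u)) (Real.cos (θ s) * τ s) s :=
      (Real.hasDerivAt_sin (θ s)).comp s (hθ s)
    have hc : HasDerivAt (fun u => Real.cos (θ u)) (-Real.sin (θ s) * τ s) s :=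
      (Real.hasDerivAt_cos (θ s)).comp s (hθ s)
    have h1 := (hα'.add (hs.smul hN')).add (hc.smul hB')
    have heq : (fun u => α u + Real.sin (θ u) • N u + Real.cos (θ u) • B u) = β := by
      funext u; rw [hβ u]
    rw [show (α + (fun u => Real.sin (θ u)) • N + (fun u => Real.cos (θ u)) • B) = β from heq] at h1
    refine h1.congr_deriv ?_
    funext i
    simp only [Pi.add_apply, Pi.smul_apply, smul_eq_mul]
    ring
  have hdβ : ∀ s, deriv β s = (1 + κ s * Real.sin (θ s)) • T s := fun s => (hβ' s).deriv
  have hetaβ : ∀ s, eta (deriv β s) (deriv β s) = -((1 + κ s * Real.sin (θ s))^2) := by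
    intro s
    rw [hdβ s]
    have h := hTT s
    simp only [eta, Pi.smul_apply, smul_eq_mul] at h ⊢
    linear_combination (1 + κ s * Real.sin (θ s))^2 * h
  have hln : ∀ s, lnorm (deriv β s) = 1 + κ s * Real.sin (θ s) := by
    intro s
    rw [lnorm, hetaβ s, abs_neg, abs_of_nonneg (sq_nonneg _), Real.sqrt_sq (hpos s).le]
  have hunit : ∀ s, (lnorm (deriv β s))⁻¹ • deriv β s = T s := by
    intro s
    rw [hln s, hdβ s, smul_smul, inv_mul_cancel₀ (ne_of_gt (hpos s)), one_smul]
  constructor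
  · intro s
    rw [hetaβ s]
    exact neg_neg_iff_pos.mpr (pow_pos (hpos s) 2)
  · simp only [hunit]
end
end

section
/- (Theorem 3.3) Let α : ℝ → ℝ³ be a unit-speed timelike Frenet curve with frame (T, N, B) and curvatures κ, τ, let c ≠ 0 be a real constant, and define β(s) = α(s) + c·((τ(s)/κ(s))·T(s) + B(s)). Assume 1 + c·(τ/κ)′(s) > 0 for all s. Then β is a timelike curve, and there exists a fixed nonzero vector d ∈ ℝ³ such that s ↦ η(β′(s)/‖β′(s)‖, d) is constant if and only if there exists a fixed nonzero vector d ∈ ℝ³ such that s ↦ η(T(s), d) is constant; that is, β is a timelike general helix if and only if α is a timelike general helix. -/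
noncomputable section

lemma eta_smul_left (r : ℝ) (u v : Fin 3 → ℝ) : eta (r • u) v = r * eta u v := by
  simp [eta]; ring

theorem stmt4
    (α T N B : ℝ → Fin 3 → ℝ) (κ τ : ℝ → ℝ)
    (hαC : ContDiff ℝ (⊤ : ℕ∞) α) (hTC : ContDiff ℝ (⊤ : ℕ∞) T) (hNC : ContDiff ℝ (⊤ : ℕ∞) N)
    (hBC : ContDiff ℝ (⊤ : ℕ∞) B) (hκC : ContDiff ℝ (⊤ : ℕ∞) κ) (hτC : ContDiff ℝ (⊤ : ℕ∞) τ)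
    (hT : ∀ s, deriv α s = T s)
    (hTT : ∀ s, eta (T s) (T s) = -1)
    (hNN : ∀ s, eta (N s) (N s) = 1)
    (hBB : ∀ s, eta (B s) (B s) = 1)
    (hTN : ∀ s, eta (T s) (N s) = 0)
    (hTB : ∀ s, eta (T s) (B s) = 0)
    (hNB : ∀ s, eta (N s) (B s) = 0)
    (hκ : ∀ s, 0 < κ s)
    (hFr1 : ∀ s, deriv T s = κ s • N s)
    (hFr2 : ∀ s, deriv N s = κ s • T s + τ s • B s)
    (hFr3 : ∀ s, deriv B s = (-τ s) • N s)
    (c : ℝ) (hc : c ≠ 0)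
    (β : ℝ → Fin 3 → ℝ)
    (hβ : ∀ s, β s = α s + c • ((τ s / κ s) • T s + B s))
    (hpos : ∀ s, 0 < 1 + c * deriv (fun u => τ u / κ u) s) :
    (∀ s, eta (deriv β s) (deriv β s) < 0) ∧
    ((∃ d : Fin 3 → ℝ, d ≠ 0 ∧ ∃ c : ℝ, ∀ s, eta ((lnorm (deriv β s))⁻¹ • deriv β s) d = c) ↔ (∃ d : Fin 3 → ℝ, d ≠ 0 ∧ ∃ c : ℝ, ∀ s, eta (T s) d = c)) := by
  have hβfun : β = fun s => α s + c • ((τ s / κ s) • T s + B s) := funext hβ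
  set g : ℝ → ℝ := fun s => 1 + c * deriv (fun u => τ u / κ u) s with hg
  have hfdiff : Differentiable ℝ fun u => τ u / κ u :=
    ((hτC.div hκC fun s => (hκ s).ne').differentiable (by simp))
  have hderiv : ∀ s, deriv β s = g s • T s := by
    intro s
    have hα' : HasDerivAt α (T s) s := by
      rw [← hT s]; exact (hαC.differentiable (by simp) s).hasDerivAt
    have hT' : HasDerivAt T (κ s • N s) s := by
      rw [← hFr1 s]; exact (hTC.differentiable (by simp) s).hasDerivAt
    have hB' : HasDerivAt B ((-τ s) • N s) s := by
      rw [← hFr3 s]; exact (hBC.differentiable (by simp) s).hasDerivAt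
    have hf' : HasDerivAt (fun u => τ u / κ u) (deriv (fun u => τ u / κ u) s) s :=
      (hfdiff s).hasDerivAt
    have h1 : HasDerivAt (fun u => (τ u / κ u) • T u)
        ((τ s / κ s) • (κ s • N s) + deriv (fun u => τ u / κ u) s • T s) s :=
      hf'.smul hT'
    have h2 : HasDerivAt (fun u => (τ u / κ u) • T u + B u)
        (((τ s / κ s) • (κ s • N s) + deriv (fun u => τ u / κ u) s • T s) + (-τ s) • N s) s :=
      h1.add hB'
    have h3 : HasDerivAt β (T s + c • ((((τ s / κ s) • (κ s • N s) +
        deriv (fun u => τ u / κ u) s • T s) + (-τ s) • N s))) s := by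
      rw [hβfun]; exact hα'.add (h2.const_smul c)
    rw [h3.deriv]
    have hτκ : (τ s / κ s) * κ s = τ s := div_mul_cancel₀ _ (hκ s).ne'
    rw [smul_smul, hτκ]
    rw [hg]
    module
  have hgpos : ∀ s, 0 < g s := hpos
  have key : ∀ s, (lnorm (deriv β s))⁻¹ • deriv β s = T s := by
    intro s
    have h1 : eta (deriv β s) (deriv β s) = -(g s ^ 2) := by
      rw [hderiv s, eta_smul_left]
      have : eta (T s) (g s • T s) = g s * eta (T s) (T s) := by
        simp [eta]; ring
      rw [this, hTT s]; ring
    have h2 : lnorm (deriv β s) = g s := by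
      rw [lnorm, h1, abs_neg, abs_of_pos (pow_pos (hgpos s) 2)]
      exact Real.sqrt_sq (hgpos s).le
    rw [h2, hderiv s, smul_smul, inv_mul_cancel₀ (hgpos s).ne', one_smul]
  constructor
  · intro s
    rw [hderiv s, eta_smul_left]
    have : eta (T s) (g s • T s) = g s * eta (T s) (T s) := by simp [eta]; ring
    rw [this, hTT s]
    nlinarith [hgpos s]
  · constructor <;> (rintro ⟨d, hd, c0, hc0⟩; exact ⟨d, hd, c0, fun s => by
      have := hc0 s; rw [key s] at *; assumption⟩)
end
end

section
/- (Theorem 3.9) Let α : ℝ → ℝ³ be a unit-speed spacelike Frenet curve with timelike binormal, with frame (T, N, B) and curvatures κ, τ. Let a₂ : ℝ → ℝ be any smooth solution of a₂″ − (κ′/κ)·a₂′ + κ²·a₂ − κ = 0, set a₁ := −a₂′/κ, and define β(s) = α(s) + a₁(s)·T(s) + a₂(s)·N(s). Then β′(s) = a₂(s)·τ(s)·B(s) for all s. Moreover, if a₂(s)·τ(s) ≠ 0 for all s, then β is a timelike curve, and if there exists a fixed nonzero vector d ∈ ℝ³ such that s ↦ η(T(s), d) is constant, then there exists a fixed nonzero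 vector d ∈ ℝ³ such that s ↦ η(β′(s)/‖β′(s)‖, d) is constant; that is, if α is a spacelike general helix then β is a timelike general helix. -/
noncomputable section

lemma eta_hasDerivAt {F : ℝ → Fin 3 → ℝ} {v : Fin 3 → ℝ} {s : ℝ}
    (h : HasDerivAt F v s) (d : Fin 3 → ℝ) :
    HasDerivAt (fun t => eta (F t) d) (eta v d) s := by
  have h' := hasDerivAt_pi.mp h
  unfold eta
  exact (((h' 0).mul_const (d 0)).neg.add ((h' 1).mul_const (d 1))).add
    ((h' 2).mul_const (d 2))

theorem stmt8
    (α T N B : ℝ → Fin 3 → ℝ) (κ τ : ℝ → ℝ)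
    (hαC : ContDiff ℝ (⊤ : ℕ∞) α) (hTC : ContDiff ℝ (⊤ : ℕ∞) T) (hNC : ContDiff ℝ (⊤ : ℕ∞) N)
    (hBC : ContDiff ℝ (⊤ : ℕ∞) B) (hκC : ContDiff ℝ (⊤ : ℕ∞) κ) (hτC : ContDiff ℝ (⊤ : ℕ∞) τ)
    (hT : ∀ s, deriv α s = T s)
    (hTT : ∀ s, eta (T s) (T s) = 1)
    (hNN : ∀ s, eta (N s) (N s) = 1)
    (hBB : ∀ s, eta (B s) (B s) = -1)
    (hTN : ∀ s, eta (T s) (N s) = 0)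
    (hTB : ∀ s, eta (T s) (B s) = 0)
    (hNB : ∀ s, eta (N s) (B s) = 0)
    (hκ : ∀ s, 0 < κ s)
    (hFr1 : ∀ s, deriv T s = κ s • N s)
    (hFr2 : ∀ s, deriv N s = (-κ s) • T s + τ s • B s)
    (hFr3 : ∀ s, deriv B s = τ s • N s)
    (a₂ : ℝ → ℝ) (ha₂C : ContDiff ℝ (⊤ : ℕ∞) a₂)
    (hode : ∀ s, deriv (deriv a₂) s - (deriv κ s / κ s) * deriv a₂ s + (κ s) ^ 2 * a₂ s - κ s = 0)
    (a₁ : ℝ → ℝ) (ha₁ : ∀ s, a₁ s = -(deriv a₂ s) / κ s)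
    (β : ℝ → Fin 3 → ℝ)
    (hβ : ∀ s, β s = α s + a₁ s • T s + a₂ s • N s) :
    (∀ s, deriv β s = (a₂ s * τ s) • B s) ∧
    ((∀ s, a₂ s * τ s ≠ 0) →
      ((∀ s, eta (deriv β s) (deriv β s) < 0) ∧
       ((∃ d : Fin 3 → ℝ, d ≠ 0 ∧ ∃ c : ℝ, ∀ s, eta (T s) d = c) → (∃ d : Fin 3 → ℝ, d ≠ 0 ∧ ∃ c : ℝ, ∀ s, eta ((lnorm (deriv β s))⁻¹ • deriv β s) d = c)))) := by
  have hκne : ∀ s, κ s ≠ 0 := fun s => (hκ s).ne'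
  have hαd : ∀ s, HasDerivAt α (T s) s := by
    intro s
    have := (hαC.differentiable (by simp) s).hasDerivAt
    rwa [hT s] at this
  have hTd : ∀ s, HasDerivAt T (κ s • N s) s := by
    intro s
    have := (hTC.differentiable (by simp) s).hasDerivAt
    rwa [hFr1 s] at this
  have hNd : ∀ s, HasDerivAt N ((-κ s) • T s + τ s • B s) s := by
    intro s
    have := (hNC.differentiable (by simp) s).hasDerivAt
    rwa [hFr2 s] at this
  have hBd : ∀ s, HasDerivAt B (τ s • N s) s := by
    intro s
    have := (hBC.differentiable (by simp) s).hasDerivAt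
    rwa [hFr3 s] at this
  have ha₂d : ∀ s, HasDerivAt a₂ (deriv a₂ s) s :=
    fun s => (ha₂C.differentiable (by simp) s).hasDerivAt
  have ha₂C' : ContDiff ℝ (⊤ : ℕ∞) a₂ := ha₂C.of_le (by simp)
  have ha₂'C : ContDiff ℝ (⊤ : ℕ∞) (deriv a₂) := (contDiff_infty_iff_deriv.mp ha₂C').2
  have ha₂'d : ∀ s, HasDerivAt (deriv a₂) (deriv (deriv a₂) s) s :=
    fun s => (ha₂'C.differentiable (by simp) s).hasDerivAt
  have hκd : ∀ s, HasDerivAt κ (deriv κ s) s :=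
    fun s => (hκC.differentiable (by simp) s).hasDerivAt
  have ha₁fun : a₁ = fun s => -(deriv a₂ s) / κ s := funext ha₁
  have ha₁d : ∀ s, HasDerivAt a₁ (κ s * a₂ s - 1) s := by
    intro s
    rw [ha₁fun]
    have h := ((ha₂'d s).neg).div (hκd s) (hκne s)
    refine h.congr_deriv ?_
    symm
    have ho := hode s
    have hκs := hκne s
    field_simp at ho ⊢
    simp only [Pi.neg_apply]
    ring_nf
    ring_nf at ho
    nlinarith [ho, sq_nonneg (κ s)]
  have hβd : ∀ s, HasDerivAt β ((a₂ s * τ s) • B s) s := by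
    intro s
    have hβfun : β = fun s => α s + a₁ s • T s + a₂ s • N s := funext hβ
    rw [hβfun]
    have h := ((hαd s).add ((ha₁d s).smul (hTd s))).add ((ha₂d s).smul (hNd s))
    refine h.congr_deriv ?_
    symm
    have ha1 := ha₁ s
    funext i
    simp only [Pi.add_apply, Pi.smul_apply, smul_eq_mul]
    rw [ha1]
    field_simp [hκne s]
    ring
  have hβ' : ∀ s, deriv β s = (a₂ s * τ s) • B s := fun s => (hβd s).deriv
  refine ⟨hβ', ?_⟩
  intro hne
  have hetaval : ∀ s, eta (deriv β s) (deriv β s) = -(a₂ s * τ s) ^ 2 := by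
    intro s
    rw [hβ' s]
    have h := hBB s
    simp only [eta, Pi.smul_apply, smul_eq_mul] at h ⊢
    nlinarith [h]
  constructor
  · intro s
    rw [hetaval s]
    have : 0 < (a₂ s * τ s) ^ 2 :=
      lt_of_le_of_ne (sq_nonneg _) (Ne.symm (pow_ne_zero 2 (hne s)))
    linarith
  · rintro ⟨d, hd0, c, hc⟩
    -- η(N s, d) = 0
    have hNd0 : ∀ s, eta (N s) d = 0 := by
      intro s
      have h1 : HasDerivAt (fun t => eta (T t) d) (eta (κ s • N s) d) s :=
        eta_hasDerivAt (hTd s) d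
      have h2 : (fun t => eta (T t) d) = fun _ => c := funext hc
      rw [h2] at h1
      have h3 : eta (κ s • N s) d = 0 := h1.unique (hasDerivAt_const s c)
      rw [eta_smul_left] at h3
      have := mul_eq_zero.mp h3
      rcases this with h | h
      · exact absurd h (hκne s)
      · exact h
    -- η(B s, d) is constant
    have hBconst : ∀ s, eta (B s) d = eta (B 0) d := by
      intro s
      have hdiff : Differentiable ℝ (fun t => eta (B t) d) := by
        intro t
        exact (eta_hasDerivAt (hBd t) d).differentiableAt
      have hder : ∀ t, deriv (fun t => eta (B t) d) t = 0 := by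
        intro t
        have h1 := (eta_hasDerivAt (hBd t) d).deriv
        rw [h1, eta_smul_left, hNd0 t, mul_zero]
      exact is_const_of_deriv_eq_zero hdiff hder s 0
    -- sign constancy of u = a₂ * τ
    set u : ℝ → ℝ := fun s => a₂ s * τ s with hu_def
    have huC : Continuous u := ha₂C.continuous.mul hτC.continuous
    have key : ∀ s t : ℝ, u s < 0 → 0 < u t → False := by
      intro s t hs ht
      have h0 : (0 : ℝ) ∈ Set.uIcc (u s) (u t) :=
        Set.mem_uIcc.mpr (Or.inl ⟨hs.le, ht.le⟩)
      obtain ⟨x, -, hx⟩ := intermediate_value_uIcc huC.continuousOn h0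
      exact hne x hx
    refine ⟨d, hd0, (u 0 / |u 0|) * eta (B 0) d, ?_⟩
    intro s
    have hlnorm : lnorm (deriv β s) = |u s| := by
      rw [lnorm, hetaval s, abs_neg, abs_pow]
      exact Real.sqrt_sq (abs_nonneg _)
    have hval : eta ((lnorm (deriv β s))⁻¹ • deriv β s) d
        = (|u s|)⁻¹ * (u s * eta (B s) d) := by
      rw [hlnorm, hβ' s]
      simp only [eta, Pi.smul_apply, smul_eq_mul]
      ring
    rw [hval, hBconst s]
    have hneu : ∀ t, u t ≠ 0 := hne
    have hsign : (|u s|)⁻¹ * u s = u 0 / |u 0| := by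
      rcases lt_or_gt_of_ne (hneu 0) with h0 | h0
      · have hs : u s < 0 := by
          rcases lt_or_gt_of_ne (hneu s) with h | h
          · exact h
          · exact absurd (key 0 s h0 h) (fun f => f)
        rw [abs_of_neg hs, abs_of_neg h0, inv_neg, neg_mul,
          inv_mul_cancel₀ (hneu s), div_neg, div_self (hneu 0)]
      · have hs : 0 < u s := by
          rcases lt_or_gt_of_ne (hneu s) with h | h
          · exact absurd (key s 0 h h0) (fun f => f)
          · exact h
        rw [abs_of_pos hs, abs_of_pos h0, inv_mul_cancel₀ (hneu s), div_self (hneu 0)]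
    rw [← mul_assoc, hsign, div_eq_mul_inv]
end
end

section
/- (Corollary 3.11(ii)) Let α : ℝ → ℝ³ be a unit-speed spacelike Frenet curve with timelike binormal, with frame (T, N, B) and curvatures κ, τ, which is a general helix with τ = m·κ for a nonzero constant m. Define β(s) = α(s) + (1/κ(s))·N(s) − ((1/τ(s))·(1/κ)′(s))·B(s). Then the function s ↦ η(β(s) − α(s), β(s) − α(s)) = (1/κ(s))² − ((1/κ(s))·(1/κ)′(s)/m)² is constant on ℝ if and only if either κ is constant, or there is a constant c with (1/κ(s))·(1/κ)′(s) = m²·s + c for all s. -/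
noncomputable section

lemma clopen_aux (g : ℝ → ℝ) (hgd : Differentiable ℝ g) (hg' : Continuous (deriv g))
    (m : ℝ) (hm : m ≠ 0) (h : ∀ s, g s = 0 ∨ deriv g s = m ^ 2)
    (s₀ : ℝ) (h₀ : g s₀ ≠ 0) : ∀ s, deriv g s = m ^ 2 := by
  have hm2 : m ^ 2 ≠ 0 := pow_ne_zero _ hm
  set E : Set ℝ := {s | deriv g s = m ^ 2} with hE
  have hclosed : IsClosed E := isClosed_eq hg' continuous_const
  have hopen : IsOpen E := by
    rw [isOpen_iff_mem_nhds]
    intro s hs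
    by_cases hgs : g s = 0
    · have hd : HasDerivAt g (m ^ 2) s := by
        have := (hgd s).hasDerivAt
        rwa [hs] at this
      have hslope := hasDerivAt_iff_tendsto_slope.mp hd
      have hev : ∀ᶠ t in nhdsWithin s {s}ᶜ, slope g s t ≠ 0 :=
        hslope.eventually_ne hm2
      have hev2 : ∀ᶠ t in nhdsWithin s {s}ᶜ, deriv g t = m ^ 2 := by
        filter_upwards [hev] with t ht
        rcases h t with h1 | h1
        · exfalso; apply ht; simp [slope, h1, hgs]
        · exact h1
      rw [eventually_nhdsWithin_iff] at hev2
      filter_upwards [hev2] with t ht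
      by_cases hts : t = s
      · rw [hts]; exact hs
      · exact ht (by simpa using hts)
    · have hev : ∀ᶠ t in nhds s, g t ≠ 0 :=
        (hgd.continuous.continuousAt (x := s)).eventually_ne hgs
      filter_upwards [hev] with t ht
      rcases h t with h1 | h1
      · exact absurd h1 ht
      · exact h1
  have hne : E.Nonempty := ⟨s₀, by rcases h s₀ with h1 | h1; exact absurd h1 h₀; exact h1⟩
  have huniv := IsClopen.eq_univ ⟨hclosed, hopen⟩ hne
  intro s
  have : s ∈ E := by rw [huniv]; trivial
  exact this

theorem stmt10
    (α T N B : ℝ → Fin 3 → ℝ) (κ τ : ℝ → ℝ)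
    (hαC : ContDiff ℝ (⊤ : ℕ∞) α) (hTC : ContDiff ℝ (⊤ : ℕ∞) T) (hNC : ContDiff ℝ (⊤ : ℕ∞) N)
    (hBC : ContDiff ℝ (⊤ : ℕ∞) B) (hκC : ContDiff ℝ (⊤ : ℕ∞) κ) (hτC : ContDiff ℝ (⊤ : ℕ∞) τ)
    (hT : ∀ s, deriv α s = T s)
    (hTT : ∀ s, eta (T s) (T s) = 1)
    (hNN : ∀ s, eta (N s) (N s) = 1)
    (hBB : ∀ s, eta (B s) (B s) = -1)
    (hTN : ∀ s, eta (T s) (N s) = 0)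
    (hTB : ∀ s, eta (T s) (B s) = 0)
    (hNB : ∀ s, eta (N s) (B s) = 0)
    (hκ : ∀ s, 0 < κ s)
    (hFr1 : ∀ s, deriv T s = κ s • N s)
    (hFr2 : ∀ s, deriv N s = (-κ s) • T s + τ s • B s)
    (hFr3 : ∀ s, deriv B s = τ s • N s)
    (m : ℝ) (hm0 : m ≠ 0) (hm : ∀ s, τ s = m * κ s)
    (β : ℝ → Fin 3 → ℝ)
    (hβ : ∀ s, β s = α s + (κ s)⁻¹ • N s - ((τ s)⁻¹ * deriv (fun u => (κ u)⁻¹) s) • B s) :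
    (∀ s, eta (β s - α s) (β s - α s)
        = ((κ s)⁻¹) ^ 2 - ((κ s)⁻¹ * deriv (fun u => (κ u)⁻¹) s / m) ^ 2) ∧
    ((∃ k : ℝ, ∀ s, eta (β s - α s) (β s - α s) = k) ↔
      ((∃ k : ℝ, ∀ s, κ s = k) ∨
       (∃ c : ℝ, ∀ s, (κ s)⁻¹ * deriv (fun u => (κ u)⁻¹) s = m ^ 2 * s + c))) := by
  have hκne : ∀ s, κ s ≠ 0 := fun s => (hκ s).ne'
  set r : ℝ → ℝ := fun u => (κ u)⁻¹ with hrdef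
  have hr : ∀ s, (κ s)⁻¹ = r s := fun s => rfl
  have hrC : ContDiff ℝ (⊤ : ℕ∞) r := (hκC.of_le (by simp)).inv hκne
  have hrD : Differentiable ℝ r := hrC.differentiable (by norm_num)
  have hr'C : ContDiff ℝ (⊤ : ℕ∞) (deriv r) := (contDiff_infty_iff_deriv.mp hrC).2
  set g : ℝ → ℝ := fun s => r s * deriv r s with hgdef
  have hgC : ContDiff ℝ (⊤ : ℕ∞) g := hrC.mul hr'C
  have hgD : Differentiable ℝ g := hgC.differentiable (by norm_num)
  have hg'C : Continuous (deriv g) := (contDiff_infty_iff_deriv.mp hgC).2.continuous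
  set f : ℝ → ℝ := fun s => (r s) ^ 2 - (g s / m) ^ 2 with hfdef
  -- Part 1
  have part1 : ∀ s, eta (β s - α s) (β s - α s) = f s := by
    intro s
    have hq : (τ s)⁻¹ * deriv r s = g s / m := by
      rw [hm s, mul_inv, hgdef]
      show m⁻¹ * (κ s)⁻¹ * deriv r s = r s * deriv r s / m
      rw [← hr s]; ring
    have hsub : β s - α s = r s • N s - (g s / m) • B s := by
      rw [hβ s, hq, hr s]; abel
    rw [hsub]
    simp only [eta, Pi.sub_apply, Pi.smul_apply, smul_eq_mul] at *
    have e1 := hNN s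
    have e2 := hBB s
    have e3 := hNB s
    show _ = (r s) ^ 2 - (g s / m) ^ 2
    linear_combination (r s) ^ 2 * e1 + (g s / m) ^ 2 * e2 - 2 * (r s) * (g s / m) * e3
  have hfD : ∀ s, HasDerivAt f (2 * g s - 2 * g s * deriv g s / m ^ 2) s := by
    intro s
    have h1 : HasDerivAt (fun s => (r s) ^ 2) (2 * r s ^ 1 * deriv r s) s :=
      ((hrD s).hasDerivAt).pow 2
    have h2 : HasDerivAt (fun s => (g s / m) ^ 2) (2 * (g s / m) ^ 1 * (deriv g s / m)) s :=
      (((hgD s).hasDerivAt).div_const m).pow 2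
    have h3 : HasDerivAt f (2 * r s ^ 1 * deriv r s - 2 * (g s / m) ^ 1 * (deriv g s / m)) s :=
      h1.sub h2
    convert h3 using 1
    rw [hgdef]
    field_simp
  have hfd : Differentiable ℝ f := fun s => (hfD s).differentiableAt
  refine ⟨part1, ?_⟩
  constructor
  · rintro ⟨k, hk⟩
    have hfk : ∀ s, f s = k := fun s => by rw [← part1 s]; exact hk s
    have hderiv0 : ∀ s, 2 * g s - 2 * g s * deriv g s / m ^ 2 = 0 := by
      intro s
      have hc : f = fun _ => k := funext hfk
      have := (hfD s).deriv
      rw [hc, deriv_const] at this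
      linarith [this]
    have halt : ∀ s, g s = 0 ∨ deriv g s = m ^ 2 := by
      intro s
      have h0 := hderiv0 s
      have hm2 : (m : ℝ) ^ 2 ≠ 0 := pow_ne_zero _ hm0
      have : g s * (m ^ 2 - deriv g s) = 0 := by
        field_simp at h0
        nlinarith [h0]
      rcases mul_eq_zero.mp this with h | h
      · exact Or.inl h
      · exact Or.inr (by linarith)
    by_cases hall : ∀ s, g s = 0
    · left
      have hr0 : ∀ s, deriv r s = 0 := by
        intro s
        have := hall s
        rw [hgdef] at this
        have hrne : r s ≠ 0 := inv_ne_zero (hκne s)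
        exact (mul_eq_zero.mp this).resolve_left hrne
      have hrc := is_const_of_deriv_eq_zero hrD hr0
      refine ⟨κ 0, fun s => ?_⟩
      have : (κ s)⁻¹ = (κ 0)⁻¹ := hrc s 0
      have := congrArg (·⁻¹) this
      simpa [inv_inv] using this
    · push_neg at hall
      obtain ⟨s₀, hs₀⟩ := hall
      have hg' := clopen_aux g hgD hg'C m hm0 halt s₀ hs₀
      right
      set p : ℝ → ℝ := fun s => g s - m ^ 2 * s with hpdef
      have hpD : ∀ s, HasDerivAt p 0 s := by
        intro s
        have h1 : HasDerivAt (fun s : ℝ => m ^ 2 * s) (m ^ 2) s := by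
          simpa using (hasDerivAt_id s).const_mul (m ^ 2)
        have h2 : HasDerivAt p (deriv g s - m ^ 2) s := ((hgD s).hasDerivAt).sub h1
        rw [hg' s, sub_self] at h2
        exact h2
      have hpc := is_const_of_deriv_eq_zero (fun s => (hpD s).differentiableAt)
        (fun s => (hpD s).deriv)
      refine ⟨g 0, fun s => ?_⟩
      have := hpc s 0
      rw [hpdef] at this
      simp only at this
      show g s = m ^ 2 * s + g 0
      linarith [this]
  · rintro (⟨k, hk⟩ | ⟨c, hc⟩)
    · have hrc : r = fun _ => k⁻¹ := funext fun s => by rw [hrdef]; simp [hk s]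
      have hr0 : ∀ s, deriv r s = 0 := fun s => by rw [hrc]; simp
      refine ⟨(k⁻¹) ^ 2, fun s => ?_⟩
      rw [part1 s, hfdef]
      show (r s) ^ 2 - (g s / m) ^ 2 = (k⁻¹) ^ 2
      rw [hgdef]
      simp [hr0 s, hrc]
    · have hgc : ∀ s, g s = m ^ 2 * s + c := fun s => hc s
      have hgfun : g = fun s => m ^ 2 * s + c := funext hgc
      have hg' : ∀ s, deriv g s = m ^ 2 := by
        intro s
        rw [hgfun]
        have h1 : HasDerivAt (fun s : ℝ => m ^ 2 * s + c) (m ^ 2) s := by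
          simpa using ((hasDerivAt_id s).const_mul (m ^ 2)).add_const c
        exact h1.deriv
      have hf0 : ∀ s, deriv f s = 0 := by
        intro s
        rw [(hfD s).deriv, hg' s]
        field_simp
        ring
      have hfc := is_const_of_deriv_eq_zero hfd hf0
      exact ⟨f 0, fun s => by rw [part1 s]; exact hfc s 0⟩
end
end

section
/- (Axis lemma) Let α : ℝ → ℝ³ be a unit-speed spacelike Frenet curve with timelike binormal, with frame (T, N, B) and curvatures κ, τ, and assume κ(s) > 0 and τ(s) ≠ 0 for all s. Then for any fixed vector d ∈ ℝ³ the following are equivalent: (i) s ↦ η(T(s), d) is constant; (ii) η(N(s), d) = 0 for all s; (iii) s ↦ η(B(s), d) is constant. In particular, a fixed direction is an axis for the tangent indicatrix of α if and only if it is an axis for the binormal indicatrix of α. -/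
noncomputable section

lemma etaHasDeriv (F : ℝ → Fin 3 → ℝ) (hF : ContDiff ℝ (⊤ : ℕ∞) F) (d : Fin 3 → ℝ) (s : ℝ) :
    HasDerivAt (fun t => eta (F t) d) (eta (deriv F s) d) s := by
  have h : HasDerivAt F (deriv F s) s := (hF.differentiable (by simp) s).hasDerivAt
  have hi : ∀ i, HasDerivAt (fun t => F t i) (deriv F s i) s := hasDerivAt_pi.mp h
  have h0 := ((hi 0).mul_const (d 0)).neg
  have h1 := (hi 1).mul_const (d 1)
  have h2 := (hi 2).mul_const (d 2)
  exact (h0.add h1).add h2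

lemma constIff (f : ℝ → ℝ) (g : ℝ → ℝ) (hf : ∀ s, HasDerivAt f (g s) s) :
    (∃ c, ∀ s, f s = c) ↔ ∀ s, g s = 0 := by
  constructor
  · rintro ⟨c, hc⟩ s
    have : f = fun _ => c := funext hc
    have h0 : HasDerivAt f 0 s := by rw [this]; exact hasDerivAt_const s c
    exact HasDerivAt.unique (hf s) h0
  · intro hg
    refine ⟨f 0, fun s => ?_⟩
    have : ∀ x, deriv f x = 0 := fun x => by
      rw [(hf x).deriv]; exact hg x
    exact is_const_of_deriv_eq_zero (fun x => (hf x).differentiableAt) this s 0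

theorem stmt11
    (α T N B : ℝ → Fin 3 → ℝ) (κ τ : ℝ → ℝ)
    (hαC : ContDiff ℝ (⊤ : ℕ∞) α) (hTC : ContDiff ℝ (⊤ : ℕ∞) T) (hNC : ContDiff ℝ (⊤ : ℕ∞) N)
    (hBC : ContDiff ℝ (⊤ : ℕ∞) B) (hκC : ContDiff ℝ (⊤ : ℕ∞) κ) (hτC : ContDiff ℝ (⊤ : ℕ∞) τ)
    (hT : ∀ s, deriv α s = T s)
    (hTT : ∀ s, eta (T s) (T s) = 1)
    (hNN : ∀ s, eta (N s) (N s) = 1)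
    (hBB : ∀ s, eta (B s) (B s) = -1)
    (hTN : ∀ s, eta (T s) (N s) = 0)
    (hTB : ∀ s, eta (T s) (B s) = 0)
    (hNB : ∀ s, eta (N s) (B s) = 0)
    (hκ : ∀ s, 0 < κ s)
    (hFr1 : ∀ s, deriv T s = κ s • N s)
    (hFr2 : ∀ s, deriv N s = (-κ s) • T s + τ s • B s)
    (hFr3 : ∀ s, deriv B s = τ s • N s)
    (hτ : ∀ s, τ s ≠ 0) :
    ∀ d : Fin 3 → ℝ,
      ((∃ c : ℝ, ∀ s, eta (T s) d = c) ↔ (∀ s, eta (N s) d = 0)) ∧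
      ((∀ s, eta (N s) d = 0) ↔ (∃ c : ℝ, ∀ s, eta (B s) d = c)) := by
  intro d
  have hTd : ∀ s, HasDerivAt (fun t => eta (T t) d) (κ s * eta (N s) d) s := by
    intro s
    have := etaHasDeriv T hTC d s
    rw [hFr1 s] at this
    convert this using 1
    simp [eta, Pi.smul_apply, smul_eq_mul]; ring
  have hBd : ∀ s, HasDerivAt (fun t => eta (B t) d) (τ s * eta (N s) d) s := by
    intro s
    have := etaHasDeriv B hBC d s
    rw [hFr3 s] at this
    convert this using 1
    simp [eta, Pi.smul_apply, smul_eq_mul]; ring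
  have h1 := constIff (fun t => eta (T t) d) (fun s => κ s * eta (N s) d) hTd
  have h2 := constIff (fun t => eta (B t) d) (fun s => τ s * eta (N s) d) hBd
  beta_reduce at h1 h2
  constructor
  · rw [h1]
    constructor
    · intro h s
      have := h s
      exact (mul_eq_zero.mp this).resolve_left (ne_of_gt (hκ s))
    · intro h s; rw [h s, mul_zero]
  · rw [h2]
    constructor
    · intro h s; rw [h s, mul_zero]
    · intro h s
      exact (mul_eq_zero.mp (h s)).resolve_left (hτ s)
end
end

section
/- (Theorem 3.15) Let α : ℝ → ℝ³ be a unit-speed spacelike Frenet curve with timelike principal normal, with frame (T, N, B) and curvatures κ, τ, with κ > 0, and let W = −τT + κB be its Darboux vector. Let β : ℝ → ℝ³ be a curve with β′(s) = F₂(s)·N(s) for a function F₂ with F₂(s) > 0 for all s. Then the following are equivalent: (i) β is a general helix, i.e. there is a fixed nonzero vector d ∈ ℝ³ with s ↦ η(β′(s)/‖β′(s)‖, d) constant; (ii) α is a slant helix, i.e. there is a fixed nonzero vector d ∈ ℝ³ with s ↦ η(N(s), d) constant; (iii) α is a Darboux helix, i.e. there is a fixed nonzero vector d ∈ ℝ³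 with s ↦ η(W(s)/‖W(s)‖, d) constant. -/
noncomputable section

lemma eta_smul_right (r : ℝ) (u v : Fin 3 → ℝ) : eta u (r • v) = r * eta u v := by
  simp [eta]; ring

lemma eta_add_left (u w v : Fin 3 → ℝ) : eta (u + w) v = eta u v + eta w v := by
  simp [eta]; ring

lemma eta_add_right (u v w : Fin 3 → ℝ) : eta u (v + w) = eta u v + eta u w := by
  simp [eta]; ring

lemma eta_comm (u v : Fin 3 → ℝ) : eta u v = eta v u := by
  simp [eta]; ring

lemma hasDerivAt_eta_left (f : ℝ → Fin 3 → ℝ) (f' : Fin 3 → ℝ) (d : Fin 3 → ℝ) (s : ℝ)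
    (hf : HasDerivAt f f' s) :
    HasDerivAt (fun t => eta (f t) d) (eta f' d) s := by
  have h : ∀ i : Fin 3, HasDerivAt (fun t => f t i) (f' i) s := fun i =>
    (ContinuousLinearMap.proj (R := ℝ) (φ := fun _ : Fin 3 => ℝ) i).hasFDerivAt.comp_hasDerivAt s hf
  exact
    (((h 0).mul_const (d 0)).neg.add ((h 1).mul_const (d 1))).add ((h 2).mul_const (d 2))



/-- Antiderivative of a continuous function. -/
lemma exists_antideriv (ρ : ℝ → ℝ) (hρc : Continuous ρ) :
    ∃ R : ℝ → ℝ, ∀ x, HasDerivAt R (ρ x) x := by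
  refine ⟨fun x => ∫ t in (0:ℝ)..x, ρ t, fun x => ?_⟩
  exact intervalIntegral.integral_hasDerivAt_right
    (hρc.intervalIntegrable 0 x) (hρc.stronglyMeasurableAtFilter _ _) hρc.continuousAt

/-- Backward uniqueness: if m vanishes on [x,y] and (w,b) vanish at y, then w vanishes at x. -/
lemma vanish_back (ρ b w m : ℝ → ℝ) (c : ℝ)
    (hρc : Continuous ρ)
    (hw : ∀ s, HasDerivAt w (ρ s * b s - c * m s) s)
    (hb : ∀ s, HasDerivAt b (ρ s * w s) s)
    (x y : ℝ) (hxy : x ≤ y)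
    (hm0 : ∀ t ∈ Set.Icc x y, m t = 0) (hwy : w y = 0) (hby : b y = 0) : w x = 0 := by
  obtain ⟨R, hR⟩ := exists_antideriv ρ hρc
  -- p = (w+b) e^{-R}
  have hp : ∀ t ∈ Set.Icc x y, HasDerivAt (fun t => (w t + b t) * Real.exp (-R t)) 0 t := by
    intro t ht
    have h1 := ((hw t).add (hb t)).mul (((hR t).neg).exp)
    have : (ρ t * b t - c * m t + ρ t * w t) * Real.exp (-R t)
        + (w t + b t) * (Real.exp (-R t) * -ρ t) = 0 := by
      rw [hm0 t ht]; ring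
    refine h1.congr_deriv ?_
    exact this
  have hq : ∀ t ∈ Set.Icc x y, HasDerivAt (fun t => (w t - b t) * Real.exp (R t)) 0 t := by
    intro t ht
    have h1 := ((hw t).sub (hb t)).mul ((hR t).exp)
    have : (ρ t * b t - c * m t - ρ t * w t) * Real.exp (R t)
        + (w t - b t) * (Real.exp (R t) * ρ t) = 0 := by
      rw [hm0 t ht]; ring
    refine h1.congr_deriv ?_
    exact this
  have cp : (w y + b y) * Real.exp (-R y) = (w x + b x) * Real.exp (-R x) := by
    apply constant_of_has_deriv_right_zero (f := fun t => (w t + b t) * Real.exp (-R t))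
      (a := x) (b := y)
    · exact fun t ht => ((hp t ht).continuousAt).continuousWithinAt
    · exact fun t ht => (hp t (Set.mem_Icc_of_Ico ht)).hasDerivWithinAt
    · exact Set.right_mem_Icc.2 hxy
  have cq : (w y - b y) * Real.exp (R y) = (w x - b x) * Real.exp (R x) := by
    apply constant_of_has_deriv_right_zero (f := fun t => (w t - b t) * Real.exp (R t))
      (a := x) (b := y)
    · exact fun t ht => ((hq t ht).continuousAt).continuousWithinAt
    · exact fun t ht => (hq t (Set.mem_Icc_of_Ico ht)).hasDerivWithinAt
    · exact Set.right_mem_Icc.2 hxy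
  rw [hwy, hby] at cp cq
  simp only [add_zero, zero_add, zero_mul, sub_zero, zero_sub, neg_zero] at cp cq
  have h1 : w x + b x = 0 := by
    rcases mul_eq_zero.1 cp.symm with h | h
    · exact h
    · exact absurd h (Real.exp_ne_zero _)
  have h2 : w x - b x = 0 := by
    rcases mul_eq_zero.1 cq.symm with h | h
    · exact h
    · exact absurd h (Real.exp_ne_zero _)
  linarith

lemma crux_forward (ρ b w m : ℝ → ℝ) (c : ℝ)
    (hρ : ∀ s, 0 < ρ s) (hρc : Continuous ρ) (hmc : Continuous m)
    (hw : ∀ s, HasDerivAt w (ρ s * b s - c * m s) s)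
    (hb : ∀ s, HasDerivAt b (ρ s * w s) s)
    (hmw : ∀ s, m s * w s = 0)
    (s₀ s₁ : ℝ) (h01 : s₀ ≤ s₁) (hw0 : w s₀ ≠ 0) : m s₁ = 0 := by
  by_contra hm1
  have hwzero : ∀ t, m t ≠ 0 → w t = 0 := by
    intro t ht
    rcases mul_eq_zero.1 (hmw t) with h | h
    · exact absurd h ht
    · exact h
  have hmzero : ∀ t, w t ≠ 0 → m t = 0 := by
    intro t ht
    rcases mul_eq_zero.1 (hmw t) with h | h
    · exact h
    · exact absurd h ht
  have hms0 : m s₀ = 0 := hmzero s₀ hw0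
  set E : Set ℝ := {x | x ∈ Set.Icc s₀ s₁ ∧ ∀ y ∈ Set.Icc s₀ x, m y = 0} with hE
  have hs0E : s₀ ∈ E := by
    refine ⟨⟨le_refl _, h01⟩, fun y hy => ?_⟩
    have : y = s₀ := le_antisymm hy.2 hy.1
    rw [this]; exact hms0
  have hbdd : BddAbove E := ⟨s₁, fun x hx => hx.1.2⟩
  set z := sSup E with hz
  have hzge : s₀ ≤ z := le_csSup hbdd hs0E
  have hzle : z ≤ s₁ := csSup_le ⟨s₀, hs0E⟩ (fun x hx => hx.1.2)
  have hm0lt : ∀ y ∈ Set.Ico s₀ z, m y = 0 := by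
    intro y hy
    obtain ⟨x, hxE, hyx⟩ := exists_lt_of_lt_csSup ⟨s₀, hs0E⟩ hy.2
    exact hxE.2 y ⟨hy.1, le_of_lt hyx⟩
  have hmz : m z = 0 := by
    rcases eq_or_lt_of_le hzge with h | h
    · rw [← h]; exact hms0
    · -- z in closure of Ico s₀ z
      have hsub : Set.Ico s₀ z ⊆ {t | m t = 0} := hm0lt
      have hcl : IsClosed {t | m t = 0} := isClosed_eq hmc continuous_const
      have : z ∈ closure (Set.Ico s₀ z) := by
        rw [closure_Ico (ne_of_lt h)]
        exact Set.right_mem_Icc.2 (le_of_lt h)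
      exact hcl.closure_subset_iff.2 hsub this
  have hm0 : ∀ y ∈ Set.Icc s₀ z, m y = 0 := by
    intro y hy
    rcases eq_or_lt_of_le hy.2 with h | h
    · rw [h]; exact hmz
    · exact hm0lt y ⟨hy.1, h⟩
  have hzlt : z < s₁ := by
    rcases eq_or_lt_of_le hzle with h | h
    · exact absurd (h ▸ hmz) hm1
    · exact h
  -- extension beyond z
  have key : ∀ᶠ y in nhds z, m y = 0 := by
    by_cases hwz : w z = 0
    · have hbz : b z ≠ 0 := by
        intro hbz0
        exact hw0 (vanish_back ρ b w m c hρc hw hb s₀ z hzge hm0 hwz hbz0)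
      have hd : HasDerivAt w (ρ z * b z) z := by
        have := hw z
        rwa [hmz, mul_zero, sub_zero] at this
      have hne : ρ z * b z ≠ 0 := mul_ne_zero (ne_of_gt (hρ z)) hbz
      have hslope := (hasDerivAt_iff_tendsto_slope.1 hd).eventually_ne hne
      have hwne : ∀ᶠ y in nhdsWithin z {z}ᶜ, w y ≠ 0 := by
        filter_upwards [hslope, self_mem_nhdsWithin] with y hy hy' hwy0
        apply hy
        rw [slope_def_field, hwy0, hwz]
        simp
      have hmne : ∀ᶠ y in nhdsWithin z {z}ᶜ, m y = 0 := by
        filter_upwards [hwne] with y hy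
        exact hmzero y hy
      rw [eventually_nhdsWithin_iff] at hmne
      filter_upwards [hmne] with y hy
      by_cases hyz : y = z
      · rw [hyz]; exact hmz
      · exact hy hyz
    · have hwc : ContinuousAt w z := (hw z).differentiableAt.continuousAt
      filter_upwards [hwc.eventually_ne hwz] with y hy
      exact hmzero y hy
  obtain ⟨δ, hδpos, hδ⟩ := Metric.eventually_nhds_iff.1 key
  set x' := min (z + δ/2) s₁ with hx'
  have hzx' : z < x' := lt_min (by linarith) hzlt
  have hx'E : x' ∈ E := by
    refine ⟨⟨le_trans hzge (le_of_lt hzx'), min_le_right _ _⟩, fun y hy => ?_⟩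
    rcases le_or_gt y z with h | h
    · exact hm0 y ⟨hy.1, h⟩
    · apply hδ
      have hyx' : y ≤ x' := hy.2
      have : y ≤ z + δ/2 := le_trans hyx' (min_le_left _ _)
      rw [Real.dist_eq, abs_of_pos (sub_pos.2 h)]
      linarith
  have : x' ≤ z := le_csSup hbdd hx'E
  linarith

lemma crux (ρ b w m : ℝ → ℝ) (c : ℝ)
    (hρ : ∀ s, 0 < ρ s) (hρc : Continuous ρ) (hmc : Continuous m)
    (hw : ∀ s, HasDerivAt w (ρ s * b s - c * m s) s)
    (hb : ∀ s, HasDerivAt b (ρ s * w s) s)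
    (hmw : ∀ s, m s * w s = 0)
    (s₀ : ℝ) (hw0 : w s₀ ≠ 0) : ∀ s, m s = 0 := by
  intro s
  rcases le_or_gt s₀ s with h | h
  · exact crux_forward ρ b w m c hρ hρc hmc hw hb hmw s₀ s h hw0
  · -- time reversal
    have hneg : ∀ t : ℝ, HasDerivAt (fun x : ℝ => -x) (-1) t := fun t => (hasDerivAt_id t).neg
    have hw' : ∀ t, HasDerivAt (fun x => w (-x)) ((ρ (-t)) * (-(b (-t))) - c * (-(m (-t)))) t := by
      intro t
      have := (hw (-t)).comp t (hneg t)
      refine this.congr_deriv ?_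
      symm
      ring
    have hb' : ∀ t, HasDerivAt (fun x => -(b (-x))) ((ρ (-t)) * (w (-t))) t := by
      intro t
      have := ((hb (-t)).comp t (hneg t)).neg
      refine this.congr_deriv ?_
      symm
      ring
    have h1 := crux_forward (fun t => ρ (-t)) (fun t => -(b (-t))) (fun t => w (-t))
      (fun t => -(m (-t))) c (fun t => hρ (-t)) (hρc.comp continuous_neg)
      (hmc.comp continuous_neg).neg hw' hb'
      (fun t => by simpa using hmw (-t)) (-s₀) (-s) (by linarith) (by simpa using hw0)
    have : -(m (- -s)) = 0 := h1
    simpa using this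



/-- If A' = κ NN, E' = τ NN, and (τκ'-κτ')(κA+τE) = 0, then (-τA+κE)/ρ is constant,
    ρ = sqrt(κ²+τ²). -/
lemma deriv_zero_helper (κ τ ρ A E NN : ℝ → ℝ)
    (hκC : ContDiff ℝ (⊤ : ℕ∞) κ) (hτC : ContDiff ℝ (⊤ : ℕ∞) τ)
    (hρpos : ∀ s, 0 < ρ s) (hρsq : ∀ s, ρ s ^ 2 = κ s ^ 2 + τ s ^ 2)
    (hρd : ∀ s, HasDerivAt ρ ((κ s * deriv κ s + τ s * deriv τ s) / ρ s) s)
    (hA : ∀ s, HasDerivAt A (κ s * NN s) s) (hE : ∀ s, HasDerivAt E (τ s * NN s) s)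
    (hkey : ∀ s, (τ s * deriv κ s - κ s * deriv τ s) * (κ s * A s + τ s * E s) = 0) :
    ∀ s t : ℝ, (ρ s)⁻¹ * (-(τ s) * A s + κ s * E s) = (ρ t)⁻¹ * (-(τ t) * A t + κ t * E t) := by
  have hκd : ∀ s, HasDerivAt κ (deriv κ s) s :=
    fun s => (hκC.differentiable (by simp) s).hasDerivAt
  have hτd : ∀ s, HasDerivAt τ (deriv τ s) s :=
    fun s => (hτC.differentiable (by simp) s).hasDerivAt
  have hfd : ∀ s, HasDerivAt (fun t => (ρ t)⁻¹ * (-(τ t) * A t + κ t * E t)) 0 s := by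
    intro s
    have h3 : ρ s ≠ 0 := ne_of_gt (hρpos s)
    have hv : HasDerivAt (fun t => -(τ t) * A t + κ t * E t)
        ((-(deriv τ s) * A s + -(τ s) * (κ s * NN s)) + (deriv κ s * E s + κ s * (τ s * NN s))) s :=
      (((hτd s).neg).mul (hA s)).add ((hκd s).mul (hE s))
    have hinv : HasDerivAt (fun t => (ρ t)⁻¹)
        (-((κ s * deriv κ s + τ s * deriv τ s) / ρ s) / ρ s ^ 2) s := (hρd s).inv h3
    have htot := hinv.mul hv
    refine htot.congr_deriv ?_
    symm
    have hk := hkey s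
    have hsq := hρsq s
    field_simp
    linear_combination (-1) * hk - (-(deriv τ s) * A s + deriv κ s * E s) * hsq
  intro s t
  exact is_const_of_deriv_eq_zero (fun x => (hfd x).differentiableAt)
    (fun x => (hfd x).deriv) s t

theorem stmt13
    (α T N B : ℝ → Fin 3 → ℝ) (κ τ : ℝ → ℝ)
    (hαC : ContDiff ℝ (⊤ : ℕ∞) α) (hTC : ContDiff ℝ (⊤ : ℕ∞) T) (hNC : ContDiff ℝ (⊤ : ℕ∞) N)
    (hBC : ContDiff ℝ (⊤ : ℕ∞) B) (hκC : ContDiff ℝ (⊤ : ℕ∞) κ) (hτC : ContDiff ℝ (⊤ : ℕ∞) τ)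
    (hT : ∀ s, deriv α s = T s)
    (hTT : ∀ s, eta (T s) (T s) = 1)
    (hNN : ∀ s, eta (N s) (N s) = -1)
    (hBB : ∀ s, eta (B s) (B s) = 1)
    (hTN : ∀ s, eta (T s) (N s) = 0)
    (hTB : ∀ s, eta (T s) (B s) = 0)
    (hNB : ∀ s, eta (N s) (B s) = 0)
    (hκ : ∀ s, 0 < κ s)
    (hFr1 : ∀ s, deriv T s = κ s • N s)
    (hFr2 : ∀ s, deriv N s = κ s • T s + τ s • B s)
    (hFr3 : ∀ s, deriv B s = τ s • N s)
    (β : ℝ → Fin 3 → ℝ) (F₂ : ℝ → ℝ) (hF₂ : ∀ s, 0 < F₂ s)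
    (hβ' : ∀ s, deriv β s = F₂ s • N s) :
    ((∃ d : Fin 3 → ℝ, d ≠ 0 ∧ ∃ c : ℝ, ∀ s, eta ((lnorm (deriv β s))⁻¹ • deriv β s) d = c) ↔ (∃ d : Fin 3 → ℝ, d ≠ 0 ∧ ∃ c : ℝ, ∀ s, eta (N s) d = c)) ∧
    ((∃ d : Fin 3 → ℝ, d ≠ 0 ∧ ∃ c : ℝ, ∀ s, eta (N s) d = c) ↔ (∃ d : Fin 3 → ℝ, d ≠ 0 ∧ ∃ c : ℝ, ∀ s, eta ((lnorm ((-τ s) • T s + κ s • B s))⁻¹ • ((-τ s) • T s + κ s • B s)) d = c)) := by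
  have hκc := hκC.continuous
  have hτc := hτC.continuous
  have hκd : ∀ s, HasDerivAt κ (deriv κ s) s := fun s => (hκC.differentiable (by simp) s).hasDerivAt
  have hτd : ∀ s, HasDerivAt τ (deriv τ s) s := fun s => (hτC.differentiable (by simp) s).hasDerivAt
  have hTd : ∀ s, HasDerivAt T (κ s • N s) s := fun s => by
    rw [← hFr1 s]; exact (hTC.differentiable (by simp) s).hasDerivAt
  have hNd : ∀ s, HasDerivAt N (κ s • T s + τ s • B s) s := fun s => by
    rw [← hFr2 s]; exact (hNC.differentiable (by simp) s).hasDerivAt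
  have hBd : ∀ s, HasDerivAt B (τ s • N s) s := fun s => by
    rw [← hFr3 s]; exact (hBC.differentiable (by simp) s).hasDerivAt
  have hsum : ∀ s, 0 < κ s ^ 2 + τ s ^ 2 := fun s => by nlinarith [hκ s, sq_nonneg (τ s)]
  have hρpos : ∀ s, 0 < (fun s => Real.sqrt (κ s ^ 2 + τ s ^ 2)) s :=
    fun s => Real.sqrt_pos.2 (hsum s)
  have hρsq : ∀ s, (fun s => Real.sqrt (κ s ^ 2 + τ s ^ 2)) s ^ 2 = κ s ^ 2 + τ s ^ 2 :=
    fun s => Real.sq_sqrt (le_of_lt (hsum s))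
  have hρd : ∀ s, HasDerivAt (fun s => Real.sqrt (κ s ^ 2 + τ s ^ 2))
      ((κ s * deriv κ s + τ s * deriv τ s) / Real.sqrt (κ s ^ 2 + τ s ^ 2)) s := by
    intro s
    have hg : HasDerivAt (fun t => κ t ^ 2 + τ t ^ 2)
        (((2 : ℕ) : ℝ) * κ s ^ (2 - 1) * deriv κ s + ((2 : ℕ) : ℝ) * τ s ^ (2 - 1) * deriv τ s) s :=
      (((hκd s).pow 2).add ((hτd s).pow 2))
    have h2 := (Real.hasDerivAt_sqrt (ne_of_gt (hsum s))).comp s hg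
    refine h2.congr_deriv ?_
    symm
    have h3 : Real.sqrt (κ s ^ 2 + τ s ^ 2) ≠ 0 := ne_of_gt (hρpos s)
    field_simp
    ring
  have hρc : Continuous (fun s => Real.sqrt (κ s ^ 2 + τ s ^ 2)) :=
    Real.continuous_sqrt.comp ((hκc.pow 2).add (hτc.pow 2))
  have hBT : ∀ s, eta (B s) (T s) = 0 := fun s => by rw [eta_comm]; exact hTB s
  have hNT : ∀ s, eta (N s) (T s) = 0 := fun s => by rw [eta_comm]; exact hTN s
  have hWW : ∀ s, eta ((-τ s) • T s + κ s • B s) ((-τ s) • T s + κ s • B s)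
      = κ s ^ 2 + τ s ^ 2 := by
    intro s
    simp only [eta_add_left, eta_add_right, eta_smul_left, eta_smul_right,
      hTT s, hBB s, hTB s, hBT s]
    ring
  have hlW : ∀ s, lnorm ((-τ s) • T s + κ s • B s) = Real.sqrt (κ s ^ 2 + τ s ^ 2) := by
    intro s
    rw [lnorm, hWW s, abs_of_pos (hsum s)]
  have hηW : ∀ s (d : Fin 3 → ℝ), eta ((-τ s) • T s + κ s • B s) d
      = -(τ s) * eta (T s) d + κ s * eta (B s) d := by
    intro s d
    rw [eta_add_left, eta_smul_left, eta_smul_left]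
  have hADer : ∀ (d : Fin 3 → ℝ) s, HasDerivAt (fun t => eta (T t) d) (κ s * eta (N s) d) s := by
    intro d s
    have := hasDerivAt_eta_left T (κ s • N s) d s (hTd s)
    rwa [eta_smul_left] at this
  have hEDer : ∀ (d : Fin 3 → ℝ) s, HasDerivAt (fun t => eta (B t) d) (τ s * eta (N s) d) s := by
    intro d s
    have := hasDerivAt_eta_left B (τ s • N s) d s (hBd s)
    rwa [eta_smul_left] at this
  have hbDer : ∀ (d : Fin 3 → ℝ) s, HasDerivAt (fun t => eta (N t) d)
      (κ s * eta (T s) d + τ s * eta (B s) d) s := by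
    intro d s
    have := hasDerivAt_eta_left N (κ s • T s + τ s • B s) d s (hNd s)
    rwa [eta_add_left, eta_smul_left, eta_smul_left] at this
  have key1 : ∀ s (d : Fin 3 → ℝ), eta ((lnorm (deriv β s))⁻¹ • deriv β s) d = eta (N s) d := by
    intro s d
    rw [hβ' s]
    have h1 : eta (F₂ s • N s) (F₂ s • N s) = -(F₂ s ^ 2) := by
      rw [eta_smul_left, eta_smul_right, hNN]; ring
    have h2 : lnorm (F₂ s • N s) = F₂ s := by
      rw [lnorm, h1, abs_neg, abs_of_pos (pow_pos (hF₂ s) 2)]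
      exact Real.sqrt_sq (le_of_lt (hF₂ s))
    rw [h2, smul_smul, eta_smul_left, inv_mul_cancel₀ (ne_of_gt (hF₂ s)), one_mul]
  constructor
  · constructor
    · rintro ⟨d, hd, c, hc⟩
      exact ⟨d, hd, c, fun s => by rw [← key1 s d]; exact hc s⟩
    · rintro ⟨d, hd, c, hc⟩
      exact ⟨d, hd, c, fun s => by rw [key1 s d]; exact hc s⟩
  constructor
  · -- slant helix → Darboux helix
    rintro ⟨d, hd, c, hc⟩
    refine ⟨d, hd, ?_⟩
    have hu0 : ∀ s, κ s * eta (T s) d + τ s * eta (B s) d = 0 := by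
      intro s
      have h1 := hbDer d s
      have h2 : (fun t => eta (N t) d) = fun _ => c := funext hc
      rw [h2] at h1
      exact h1.unique (hasDerivAt_const s c)
    have hconst := deriv_zero_helper κ τ (fun s => Real.sqrt (κ s ^ 2 + τ s ^ 2))
      (fun t => eta (T t) d) (fun t => eta (B t) d) (fun t => eta (N t) d)
      hκC hτC hρpos hρsq hρd (hADer d) (hEDer d)
      (fun s => by rw [hu0 s, mul_zero])
    refine ⟨(Real.sqrt (κ 0 ^ 2 + τ 0 ^ 2))⁻¹ * (-(τ 0) * eta (T 0) d + κ 0 * eta (B 0) d),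
      fun s => ?_⟩
    rw [hlW s, eta_smul_left, hηW s d]
    exact hconst s 0
  · -- Darboux helix → slant helix
    rintro ⟨d, hd, c, hc⟩
    have hv : ∀ s, -(τ s) * eta (T s) d + κ s * eta (B s) d
        = c * Real.sqrt (κ s ^ 2 + τ s ^ 2) := by
      intro s
      have h1 := hc s
      have h3 : Real.sqrt (κ s ^ 2 + τ s ^ 2) ≠ 0 := ne_of_gt (hρpos s)
      rw [hlW s, eta_smul_left, hηW s d, inv_mul_eq_div, div_eq_iff h3] at h1
      linarith [h1]
    have hμu : ∀ s, (τ s * deriv κ s - κ s * deriv τ s) *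
        (κ s * eta (T s) d + τ s * eta (B s) d) = 0 := by
      intro s
      have hvfun : (fun t => -(τ t) * eta (T t) d + κ t * eta (B t) d)
          = fun t => c * Real.sqrt (κ t ^ 2 + τ t ^ 2) := funext hv
      have hvd : HasDerivAt (fun t => -(τ t) * eta (T t) d + κ t * eta (B t) d)
          ((-(deriv τ s) * eta (T s) d + -(τ s) * (κ s * eta (N s) d))
            + (deriv κ s * eta (B s) d + κ s * (τ s * eta (N s) d))) s :=
        (((hτd s).neg).mul (hADer d s)).add ((hκd s).mul (hEDer d s))
      have hcd : HasDerivAt (fun t => c * Real.sqrt (κ t ^ 2 + τ t ^ 2))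
          (c * ((κ s * deriv κ s + τ s * deriv τ s) / Real.sqrt (κ s ^ 2 + τ s ^ 2))) s :=
        (hρd s).const_mul c
      rw [hvfun] at hvd
      have heq := hvd.unique hcd
      have h3 : Real.sqrt (κ s ^ 2 + τ s ^ 2) ≠ 0 := ne_of_gt (hρpos s)
      have heq2 : Real.sqrt (κ s ^ 2 + τ s ^ 2) *
          ((-(deriv τ s) * eta (T s) d + -(τ s) * (κ s * eta (N s) d))
            + (deriv κ s * eta (B s) d + κ s * (τ s * eta (N s) d)))
          = c * (κ s * deriv κ s + τ s * deriv τ s) := by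
        rw [heq]; field_simp
      have hsq := hρsq s
      have hvs := hv s
      linear_combination Real.sqrt (κ s ^ 2 + τ s ^ 2) * heq2
        - (κ s * deriv κ s + τ s * deriv τ s) * hvs
        - (-(deriv τ s) * eta (T s) d + deriv κ s * eta (B s) d) * hsq
    have hwdv : ∀ s, HasDerivAt
        (fun s => (κ s * eta (T s) d + τ s * eta (B s) d) / Real.sqrt (κ s ^ 2 + τ s ^ 2))
        ((fun s => Real.sqrt (κ s ^ 2 + τ s ^ 2)) s * (fun s => eta (N s) d) s
          - c * (fun s => (τ s * deriv κ s - κ s * deriv τ s) / Real.sqrt (κ s ^ 2 + τ s ^ 2) ^ 2) s) s := by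
      intro s
      have h3 : Real.sqrt (κ s ^ 2 + τ s ^ 2) ≠ 0 := ne_of_gt (hρpos s)
      have hudv : HasDerivAt (fun t => κ t * eta (T t) d + τ t * eta (B t) d)
          ((deriv κ s * eta (T s) d + κ s * (κ s * eta (N s) d))
            + (deriv τ s * eta (B s) d + τ s * (τ s * eta (N s) d))) s :=
        ((hκd s).mul (hADer d s)).add ((hτd s).mul (hEDer d s))
      have := hudv.div (hρd s) h3
      refine this.congr_deriv ?_
      symm
      have hsq := hρsq s
      have hvs := hv s
      have h4 : κ s ^ 2 + τ s ^ 2 ≠ 0 := ne_of_gt (hsum s)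
      simp only
      field_simp [h3, h4]
      linear_combination (Real.sqrt (κ s ^ 2 + τ s ^ 2) ^ 2 * eta (N s) d - (deriv κ s * eta (T s) d + deriv τ s * eta (B s) d)) * hsq
        + (τ s * deriv κ s - κ s * deriv τ s) * hvs
    have hbdv : ∀ s, HasDerivAt (fun s => eta (N s) d)
        ((fun s => Real.sqrt (κ s ^ 2 + τ s ^ 2)) s *
          (fun s => (κ s * eta (T s) d + τ s * eta (B s) d) / Real.sqrt (κ s ^ 2 + τ s ^ 2)) s) s := by
      intro s
      have h3 : Real.sqrt (κ s ^ 2 + τ s ^ 2) ≠ 0 := ne_of_gt (hρpos s)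
      have := hbDer d s
      refine this.congr_deriv ?_
      symm
      field_simp
    have hmw : ∀ s, (fun s => (τ s * deriv κ s - κ s * deriv τ s) / Real.sqrt (κ s ^ 2 + τ s ^ 2) ^ 2) s *
        (fun s => (κ s * eta (T s) d + τ s * eta (B s) d) / Real.sqrt (κ s ^ 2 + τ s ^ 2)) s = 0 := by
      intro s
      simp only
      rw [div_mul_div_comm, hμu s, zero_div]
    have hκ'c : Continuous (deriv κ) := hκC.continuous_deriv (by simp)
    have hτ'c : Continuous (deriv τ) := hτC.continuous_deriv (by simp)
    have hmc : Continuous (fun s => (τ s * deriv κ s - κ s * deriv τ s) / Real.sqrt (κ s ^ 2 + τ s ^ 2) ^ 2) :=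
      ((hτc.mul hκ'c).sub (hκc.mul hτ'c)).div (hρc.pow 2)
        (fun s => pow_ne_zero 2 (ne_of_gt (hρpos s)))
    by_cases hcase : ∀ s, κ s * eta (T s) d + τ s * eta (B s) d = 0
    · have hbz : ∀ s, HasDerivAt (fun t => eta (N t) d) 0 s := by
        intro s
        have := hbDer d s
        rwa [hcase s] at this
      exact ⟨d, hd, eta (N 0) d, fun s => is_const_of_deriv_eq_zero
        (fun x => (hbz x).differentiableAt) (fun x => (hbz x).deriv) s 0⟩
    · push_neg at hcase
      obtain ⟨s₀, hs₀⟩ := hcase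
      have hw0 : (κ s₀ * eta (T s₀) d + τ s₀ * eta (B s₀) d) / Real.sqrt (κ s₀ ^ 2 + τ s₀ ^ 2) ≠ 0 :=
        div_ne_zero hs₀ (ne_of_gt (hρpos s₀))
      have hm0 := crux (fun s => Real.sqrt (κ s ^ 2 + τ s ^ 2)) (fun s => eta (N s) d)
        (fun s => (κ s * eta (T s) d + τ s * eta (B s) d) / Real.sqrt (κ s ^ 2 + τ s ^ 2))
        (fun s => (τ s * deriv κ s - κ s * deriv τ s) / Real.sqrt (κ s ^ 2 + τ s ^ 2) ^ 2)
        c hρpos hρc hmc hwdv hbdv hmw s₀ hw0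
      have hμ0 : ∀ s, τ s * deriv κ s - κ s * deriv τ s = 0 := by
        intro s
        have h1 := hm0 s
        have h3 : Real.sqrt (κ s ^ 2 + τ s ^ 2) ^ 2 ≠ 0 :=
          pow_ne_zero 2 (ne_of_gt (hρpos s))
        exact (div_eq_zero_iff.1 h1).resolve_right h3
      have hTi : ∀ (i : Fin 3) s, HasDerivAt (fun t => T t i) (κ s * N s i) s := by
        intro i s
        have := (ContinuousLinearMap.proj (R := ℝ) (φ := fun _ : Fin 3 => ℝ) i).hasFDerivAt.comp_hasDerivAt s (hTd s)
        exact this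
      have hBi : ∀ (i : Fin 3) s, HasDerivAt (fun t => B t i) (τ s * N s i) s := by
        intro i s
        have := (ContinuousLinearMap.proj (R := ℝ) (φ := fun _ : Fin 3 => ℝ) i).hasFDerivAt.comp_hasDerivAt s (hBd s)
        exact this
      have hCconst : ∀ (i : Fin 3) (s t : ℝ),
          (Real.sqrt (κ s ^ 2 + τ s ^ 2))⁻¹ * (-(τ s) * T s i + κ s * B s i)
          = (Real.sqrt (κ t ^ 2 + τ t ^ 2))⁻¹ * (-(τ t) * T t i + κ t * B t i) :=
        fun i => deriv_zero_helper κ τ (fun s => Real.sqrt (κ s ^ 2 + τ s ^ 2))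
          (fun t => T t i) (fun t => B t i) (fun t => N t i)
          hκC hτC hρpos hρsq hρd (hTi i) (hBi i) (fun s => by rw [hμ0 s, zero_mul])
      refine ⟨(Real.sqrt (κ 0 ^ 2 + τ 0 ^ 2))⁻¹ • ((-τ 0) • T 0 + κ 0 • B 0), ?_, 0, ?_⟩
      · intro h0
        have h1 : eta ((Real.sqrt (κ 0 ^ 2 + τ 0 ^ 2))⁻¹ • ((-τ 0) • T 0 + κ 0 • B 0))
            ((Real.sqrt (κ 0 ^ 2 + τ 0 ^ 2))⁻¹ • ((-τ 0) • T 0 + κ 0 • B 0)) = 1 := by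
          rw [eta_smul_left, eta_smul_right, hWW 0, ← hρsq 0]
          have h3 : Real.sqrt (κ 0 ^ 2 + τ 0 ^ 2) ≠ 0 := ne_of_gt (hρpos 0)
          field_simp
          rw [Real.sqrt_sq (Real.sqrt_nonneg _)]
        rw [h0] at h1
        simp [eta] at h1
      · intro s
        have hds : (Real.sqrt (κ 0 ^ 2 + τ 0 ^ 2))⁻¹ • ((-τ 0) • T 0 + κ 0 • B 0)
            = (Real.sqrt (κ s ^ 2 + τ s ^ 2))⁻¹ • ((-τ s) • T s + κ s • B s) := by
          funext i
          have h1 := hCconst i 0 s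
          simp only [Pi.smul_apply, Pi.add_apply, smul_eq_mul]
          linarith [h1]
        rw [hds, eta_smul_right, eta_add_right, eta_smul_right, eta_smul_right, hNT s, hNB s]
        ring
end
end

section
/- (Theorem 3.19) Let α : ℝ → ℝ³ be a unit-speed spacelike Frenet curve with timelike principal normal, with frame (T, N, B) and curvatures κ, τ, and let ξ, ζ ∈ ℝ be constants. Define β(s) = α(s) + (ξ − s)·T(s) + ζ·B(s). Then β′(s) = ((ξ − s)·κ(s) + ζ·τ(s))·N(s) for all s. Moreover, assuming (ξ − s)·κ(s) + ζ·τ(s) > 0 for all s in an interval I, on I the curve β is timelike, and there exists a fixed nonzero vector d ∈ ℝ³ such that s ↦ η(β′(s)/‖β′(s)‖, d) is constant on I if and only if there exists a fixed nonzero vector d ∈ ℝ³ such that s ↦ η(N(s), d) is constant on I; that is, β is a timelike general helix if and only if α is a spacelike slant helix. -/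
noncomputable section

lemma eta_smul_smul (c : ℝ) (u : Fin 3 → ℝ) :
    eta (c • u) (c • u) = c ^ 2 * eta u u := by
  simp [eta, Pi.smul_apply, smul_eq_mul]; ring

theorem stmt15
    (α T N B : ℝ → Fin 3 → ℝ) (κ τ : ℝ → ℝ)
    (hαC : ContDiff ℝ (⊤ : ℕ∞) α) (hTC : ContDiff ℝ (⊤ : ℕ∞) T) (hNC : ContDiff ℝ (⊤ : ℕ∞) N)
    (hBC : ContDiff ℝ (⊤ : ℕ∞) B) (hκC : ContDiff ℝ (⊤ : ℕ∞) κ) (hτC : ContDiff ℝ (⊤ : ℕ∞) τ)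
    (hT : ∀ s, deriv α s = T s)
    (hTT : ∀ s, eta (T s) (T s) = 1)
    (hNN : ∀ s, eta (N s) (N s) = -1)
    (hBB : ∀ s, eta (B s) (B s) = 1)
    (hTN : ∀ s, eta (T s) (N s) = 0)
    (hTB : ∀ s, eta (T s) (B s) = 0)
    (hNB : ∀ s, eta (N s) (B s) = 0)
    (hκ : ∀ s, 0 < κ s)
    (hFr1 : ∀ s, deriv T s = κ s • N s)
    (hFr2 : ∀ s, deriv N s = κ s • T s + τ s • B s)
    (hFr3 : ∀ s, deriv B s = τ s • N s)
    (ξ ζ : ℝ)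
    (β : ℝ → Fin 3 → ℝ)
    (hβ : ∀ s, β s = α s + (ξ - s) • T s + ζ • B s) :
    (∀ s, deriv β s = ((ξ - s) * κ s + ζ * τ s) • N s) ∧
    (∀ I : Set ℝ, (∀ s ∈ I, 0 < (ξ - s) * κ s + ζ * τ s) →
      ((∀ s ∈ I, eta (deriv β s) (deriv β s) < 0) ∧
       ((∃ d : Fin 3 → ℝ, d ≠ 0 ∧ ∃ c : ℝ, ∀ s ∈ I, eta ((lnorm (deriv β s))⁻¹ • deriv β s) d = c) ↔ (∃ d : Fin 3 → ℝ, d ≠ 0 ∧ ∃ c : ℝ, ∀ s ∈ I, eta (N s) d = c)))) := by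
  have hderiv : ∀ s, deriv β s = ((ξ - s) * κ s + ζ * τ s) • N s := by
    intro s
    have hα' : HasDerivAt α (T s) s := by
      rw [← hT s]
      exact (hαC.differentiable (by simp) s).hasDerivAt
    have hT' : HasDerivAt T (κ s • N s) s := by
      rw [← hFr1 s]
      exact (hTC.differentiable (by simp) s).hasDerivAt
    have hB' : HasDerivAt B (τ s • N s) s := by
      rw [← hFr3 s]
      exact (hBC.differentiable (by simp) s).hasDerivAt
    have hc : HasDerivAt (fun t : ℝ => ξ - t) (-1) s := by
      simpa using (hasDerivAt_id s).const_sub ξ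
    have h1 : HasDerivAt (fun t => (ξ - t) • T t)
        ((ξ - s) • (κ s • N s) + (-1 : ℝ) • T s) s := hc.smul hT'
    have h2 : HasDerivAt (fun t => ζ • B t) (ζ • (τ s • N s)) s := hB'.const_smul ζ
    have hβ' : HasDerivAt β (T s + ((ξ - s) • (κ s • N s) + (-1 : ℝ) • T s) + ζ • (τ s • N s)) s := by
      have := (hα'.add h1).add h2
      apply this.congr_of_eventuallyEq
      filter_upwards with t
      rw [hβ t]
      rfl
    rw [hβ'.deriv]
    simp [smul_smul]
    module
  refine ⟨hderiv, fun I hI => ?_⟩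
  set f : ℝ → ℝ := fun s => (ξ - s) * κ s + ζ * τ s with hf
  have heta : ∀ s, eta (deriv β s) (deriv β s) = -(f s ^ 2) := by
    intro s
    rw [hderiv s, eta_smul_smul, hNN s]
    ring
  have hneg : ∀ s ∈ I, eta (deriv β s) (deriv β s) < 0 := by
    intro s hs
    rw [heta s]
    have hp : 0 < f s := hI s hs
    nlinarith
  refine ⟨hneg, ?_⟩
  have hunit : ∀ s ∈ I, (lnorm (deriv β s))⁻¹ • deriv β s = N s := by
    intro s hs
    have hfpos := hI s hs
    have hln : lnorm (deriv β s) = f s := by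
      rw [lnorm, heta s, abs_neg, abs_of_nonneg (sq_nonneg _), Real.sqrt_sq hfpos.le]
    rw [hln, hderiv s, smul_smul, inv_mul_cancel₀ hfpos.ne', one_smul]
  constructor
  · rintro ⟨d, hd, c, hc⟩
    exact ⟨d, hd, c, fun s hs => by rw [← hunit s hs]; exact hc s hs⟩
  · rintro ⟨d, hd, c, hc⟩
    exact ⟨d, hd, c, fun s hs => by rw [hunit s hs]; exact hc s hs⟩
end
end

section
/- (Verification of Theorem 3.12) Let κ : ℝ → ℝ be a smooth function with κ(s) > 0 for all s, let n ≠ 0 be a real number, set m = n/√(1 + n²), and let θ : ℝ → ℝ be an antiderivative of κ. Define ψ : ℝ → ℝ³ as any curve with derivative ψ′(s) = √(1 + n²)·(cosh(√(1 − m²)·θ(s)), sinh(√(1 − m²)·θ(s)), m). Then: (a) η(ψ′(s), ψ′(s)) = −1 for all s, so ψ is a unit-speed timelike curve; (b) ψ″(s) = κ(s)·N(s) where N(s) = (sinh(√(1 − m²)·θ(s)), cosh(√(1 − m²)·θ(s)), 0) satisfies η(N, N) = 1, so the first curvature of ψ is κ; and (c) η(ψ′(s), e₃) = n for all s, where e₃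 = (0, 0, 1) is spacelike, so the unit tangent of ψ makes a constant Lorentzian product with the fixed spacelike line spanned by e₃, i.e. ψ is a timelike general helix with spacelike axis e₃. -/
noncomputable section

theorem stmt18
    (κ : ℝ → ℝ) (hκC : ContDiff ℝ (⊤ : ℕ∞) κ) (hκ : ∀ s, 0 < κ s)
    (n : ℝ) (hn : n ≠ 0) (m : ℝ) (hm : m = n / Real.sqrt (1 + n ^ 2))
    (θ : ℝ → ℝ) (hθ : ∀ s, HasDerivAt θ (κ s) s)
    (ψ : ℝ → Fin 3 → ℝ)
    (hψ : ∀ s, deriv ψ s = Real.sqrt (1 + n ^ 2) •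
      ![Real.cosh (Real.sqrt (1 - m ^ 2) * θ s), Real.sinh (Real.sqrt (1 - m ^ 2) * θ s), m]) :
    (∀ s, eta (deriv ψ s) (deriv ψ s) = -1) ∧
    (∀ s, deriv (deriv ψ) s = κ s •
      ![Real.sinh (Real.sqrt (1 - m ^ 2) * θ s), Real.cosh (Real.sqrt (1 - m ^ 2) * θ s), 0]) ∧
    (∀ s, eta ![Real.sinh (Real.sqrt (1 - m ^ 2) * θ s), Real.cosh (Real.sqrt (1 - m ^ 2) * θ s), 0]
              ![Real.sinh (Real.sqrt (1 - m ^ 2) * θ s), Real.cosh (Real.sqrt (1 - m ^ 2) * θ s), 0] = 1) ∧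
    (∀ s, eta (deriv ψ s) ![0, 0, 1] = n) ∧
    (0 : ℝ) < eta ![0, 0, 1] ![0, 0, 1] := by
  have h1 : (0:ℝ) < 1 + n ^ 2 := by positivity
  set a := Real.sqrt (1 + n ^ 2) with ha_def
  have ha : 0 < a := Real.sqrt_pos.2 h1
  have ha2 : a ^ 2 = 1 + n ^ 2 := Real.sq_sqrt h1.le
  have ham : a * m = n := by
    rw [hm]; field_simp
  have hm2 : 1 - m ^ 2 = 1 / (1 + n ^ 2) := by
    have hmsq : m ^ 2 = n ^ 2 / (1 + n ^ 2) := by rw [hm, div_pow, ha2]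
    rw [hmsq]; field_simp; ring
  set c := Real.sqrt (1 - m ^ 2) with hc_def
  have hc : c = 1 / a := by
    rw [hc_def, hm2, one_div, Real.sqrt_inv, ← ha_def, one_div]
  have hac : a * c = 1 := by rw [hc]; field_simp
  refine ⟨?_, ?_, ?_, ?_, ?_⟩
  · intro s
    rw [hψ s]
    have h := Real.cosh_sq_sub_sinh_sq (c * θ s)
    simp only [eta, Pi.smul_apply, Matrix.cons_val_zero, Matrix.cons_val_one, Matrix.head_cons,
      Matrix.cons_val_two, Matrix.tail_cons, smul_eq_mul]
    linear_combination (-(a ^ 2)) * h - ha2 + (a * m + n) * ham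
  · intro s
    have hde : deriv ψ = fun t => a • ![Real.cosh (c * θ t), Real.sinh (c * θ t), m] := by
      funext t; exact hψ t
    rw [hde]
    have h0 : HasDerivAt (fun t => a * Real.cosh (c * θ t)) (κ s * Real.sinh (c * θ s)) s := by
      have h' := (((hθ s).const_mul c).cosh).const_mul a
      exact h'.congr_deriv (by linear_combination (κ s * Real.sinh (c * θ s)) * hac)
    have hh1 : HasDerivAt (fun t => a * Real.sinh (c * θ t)) (κ s * Real.cosh (c * θ s)) s := by
      have h' := (((hθ s).const_mul c).sinh).const_mul a
      exact h'.congr_deriv (by linear_combination (κ s * Real.cosh (c * θ s)) * hac)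
    have hda : HasDerivAt (fun t => a • ![Real.cosh (c * θ t), Real.sinh (c * θ t), m])
        (κ s • ![Real.sinh (c * θ s), Real.cosh (c * θ s), 0]) s := by
      rw [hasDerivAt_pi]
      intro i
      fin_cases i
      · exact h0
      · exact hh1
      · have : ((κ s • ![Real.sinh (c * θ s), Real.cosh (c * θ s), (0:ℝ)]) (⟨2, by norm_num⟩ : Fin 3)) = 0 := by
          simp
        rw [this]
        exact hasDerivAt_const s (a * m)
    exact hda.deriv
  · intro s
    have h := Real.cosh_sq_sub_sinh_sq (c * θ s)
    simp only [eta, Matrix.cons_val_zero, Matrix.cons_val_one, Matrix.head_cons,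
      Matrix.cons_val_two, Matrix.tail_cons]
    linarith [h]
  · intro s
    rw [hψ s]
    simp only [eta, Pi.smul_apply, Matrix.cons_val_zero, Matrix.cons_val_one, Matrix.head_cons,
      Matrix.cons_val_two, Matrix.tail_cons, smul_eq_mul, mul_zero, mul_one]
    linarith [ham]
  · norm_num [eta]
    simp [Matrix.cons_val]
end
end

section
/- (Verification of Theorem 3.25) Let κ : ℝ → ℝ be a smooth function with κ(s) > 0 for all s, let n ≠ 0 be a real number, set m = n/√(1 + n²), let θ be an antiderivative of κ, assume |m·θ(s)| < 1 for all s, and set A(s) = (1/n)·arcsin(m·θ(s)). Define ψ : ℝ → ℝ³ as any curve whose second derivative exists and whose first derivative is ψ′(s) = ((n/m)·∫κ·cosh A, (n/m)·∫κ·sinh A, n·θ(s)) (componentwise antiderivatives of κ·cosh A, κ·sinh A, κ). Then ψ″(s) = κ(s)·N(s) where N(s) = ((n/m)·cosh(A(s)), (n/m)·sinh(A(s)), n), and this N satisfies: (a) η(N(s), N(s)) = −1 for all s, i.e. the principal normal of ψ is a unit timelike vector; and (b) η(N(s), e₃) = n for all s, where e₃ = (0, 0, 1), so the principal normal of ψ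 makes a constant Lorentzian product with the fixed spacelike axis e₃, i.e. ψ is a slant helix with axis e₃. -/
noncomputable section

theorem stmt19
    (κ : ℝ → ℝ) (hκC : ContDiff ℝ (⊤ : ℕ∞) κ) (hκ : ∀ s, 0 < κ s)
    (n : ℝ) (hn : n ≠ 0) (m : ℝ) (hm : m = n / Real.sqrt (1 + n ^ 2))
    (θ : ℝ → ℝ) (hθ : ∀ s, HasDerivAt θ (κ s) s)
    (hbound : ∀ s, |m * θ s| < 1)
    (A : ℝ → ℝ) (hA : ∀ s, A s = (1 / n) * Real.arcsin (m * θ s))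
    (Cc Ss : ℝ → ℝ)
    (hCc : ∀ s, HasDerivAt Cc (κ s * Real.cosh (A s)) s)
    (hSs : ∀ s, HasDerivAt Ss (κ s * Real.sinh (A s)) s)
    (ψ : ℝ → Fin 3 → ℝ)
    (hψ : ∀ s, deriv ψ s = ![(n / m) * Cc s, (n / m) * Ss s, n * θ s]) :
    (∀ s, deriv (deriv ψ) s = κ s • ![(n / m) * Real.cosh (A s), (n / m) * Real.sinh (A s), n]) ∧
    (∀ s, eta ![(n / m) * Real.cosh (A s), (n / m) * Real.sinh (A s), n] ![(n / m) * Real.cosh (A s), (n / m) * Real.sinh (A s), n] = -1) ∧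
    (∀ s, eta ![(n / m) * Real.cosh (A s), (n / m) * Real.sinh (A s), n] ![0, 0, 1] = n) := by
  have hs : (0:ℝ) < Real.sqrt (1 + n ^ 2) := Real.sqrt_pos.mpr (by positivity)
  have hnm : n / m = Real.sqrt (1 + n ^ 2) := by
    rw [hm]; field_simp
  have hnm2 : (n / m) ^ 2 = 1 + n ^ 2 := by
    rw [hnm, Real.sq_sqrt (by positivity)]
  refine ⟨?_, ?_, ?_⟩
  · intro s
    have hfun : deriv ψ = fun t => ![(n / m) * Cc t, (n / m) * Ss t, n * θ t] :=
      funext hψ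
    rw [hfun]
    have hd : HasDerivAt (fun t => ![(n / m) * Cc t, (n / m) * Ss t, n * θ t])
        (![κ s * ((n / m) * Real.cosh (A s)), κ s * ((n / m) * Real.sinh (A s)),
          κ s * n]) s := by
      rw [hasDerivAt_pi]
      intro i
      fin_cases i
      · simpa [mul_comm, mul_left_comm] using (hCc s).const_mul (n / m)
      · simpa [mul_comm, mul_left_comm] using (hSs s).const_mul (n / m)
      · simpa [mul_comm] using (hθ s).const_mul n
    rw [hd.deriv]
    simp [Matrix.smul_cons]
  · intro s
    simp only [eta, Matrix.cons_val_zero, Matrix.cons_val_one, Matrix.head_cons,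
      Matrix.cons_val_two, Matrix.tail_cons]
    have hcs : Real.cosh (A s) ^ 2 - Real.sinh (A s) ^ 2 = 1 := Real.cosh_sq_sub_sinh_sq _
    nlinarith [hnm2]
  · intro s
    simp [eta]
end
end
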